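/- Let s, y ∈ ℝ^n be nonzero vectors with sᵀy > 0, and set α^{BB1} = sᵀy/(yᵀy), α^{BB2} = sᵀs/(sᵀy), and α^{BB3} = (sᵀs − yᵀy + √((yᵀy − sᵀs)² + 4(sᵀy)²)) / (2 sᵀy). Then α^{BB1} ≤ α^{BB3} ≤ α^{BB2}. -/
import Mathlib


open RealInnerProductSpace

lemma bb3_key (a b c : ℝ) (ha : 0 < a) (hb : 0 < b) (hc : 0 < c) (hab : c ^ 2 ≤ a * b) :
    c / b ≤ (a - b + Real.sqrt ((b - a) ^ 2 + 4 * c ^ 2)) / (2 * c) ∧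
      (a - b + Real.sqrt ((b - a) ^ 2 + 4 * c ^ 2)) / (2 * c) ≤ a / c := by
  have hDnn : (0:ℝ) ≤ (b - a) ^ 2 + 4 * c ^ 2 := by positivity
  have hsq : Real.sqrt ((b - a) ^ 2 + 4 * c ^ 2) ^ 2 = (b - a) ^ 2 + 4 * c ^ 2 :=
    Real.sq_sqrt hDnn
  have hsnn : 0 ≤ Real.sqrt ((b - a) ^ 2 + 4 * c ^ 2) := Real.sqrt_nonneg _
  have hupper : Real.sqrt ((b - a) ^ 2 + 4 * c ^ 2) ≤ a + b := by
    rw [show a + b = Real.sqrt ((a + b) ^ 2) from (Real.sqrt_sq (by linarith)).symm]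
    apply Real.sqrt_le_sqrt
    nlinarith
  set t : ℝ := c ^ 2 / b with ht_def
  have htb : t * b = c ^ 2 := div_mul_cancel₀ _ hb.ne'
  have ht0 : 0 ≤ t := by positivity
  have hta : t ≤ a := by
    rw [ht_def, div_le_iff₀ hb]; exact hab
  have hlower : 2 * t + b - a ≤ Real.sqrt ((b - a) ^ 2 + 4 * c ^ 2) := by
    rcases le_or_gt (2 * t + b - a) 0 with h0 | h0
    · linarith
    · refine (Real.le_sqrt h0.le hDnn).mpr ?_
      nlinarith
  constructor
  · rw [div_le_div_iff₀ hb (by positivity)]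
    have := mul_le_mul_of_nonneg_right hlower hb.le
    nlinarith
  · rw [div_le_div_iff₀ (by positivity) hc]
    nlinarith

/-- Theorem 1, second claim: `α^{BB1} ≤ α^{BB3} ≤ α^{BB2}`. -/
theorem bb3_between_bb1_and_bb2 {n : ℕ} (s y : EuclideanSpace ℝ (Fin n))
    (hs : s ≠ 0) (hy : y ≠ 0) (h : ⟪s, y⟫ > 0) :
    ⟪s, y⟫ / ⟪y, y⟫ ≤
      (⟪s, s⟫ - ⟪y, y⟫ + Real.sqrt ((⟪y, y⟫ - ⟪s, s⟫) ^ 2 + 4 * ⟪s, y⟫ ^ 2)) /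
        (2 * ⟪s, y⟫) ∧
    (⟪s, s⟫ - ⟪y, y⟫ + Real.sqrt ((⟪y, y⟫ - ⟪s, s⟫) ^ 2 + 4 * ⟪s, y⟫ ^ 2)) /
        (2 * ⟪s, y⟫) ≤ ⟪s, s⟫ / ⟪s, y⟫ := by
  have ha : (0:ℝ) < ⟪s, s⟫ := by
    rw [real_inner_self_eq_norm_sq]
    have : ‖s‖ ≠ 0 := norm_ne_zero_iff.mpr hs
    positivity
  have hb : (0:ℝ) < ⟪y, y⟫ := by
    rw [real_inner_self_eq_norm_sq]
    have : ‖y‖ ≠ 0 := norm_ne_zero_iff.mpr hy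
    positivity
  have hab : ⟪s, y⟫ ^ 2 ≤ ⟪s, s⟫ * ⟪y, y⟫ := by
    have := real_inner_mul_inner_self_le s y
    nlinarith
  exact bb3_key _ _ _ ha hb h hab
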